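/- (Positivity propagation to the unbounded region) Let K satisfy the kernel assumption, δ > 0, and let a_1, …, a_n ∈ ℝ^p be fixed vectors and b_1, …, b_n ≥ 0 fixed scalars. If there exists M > 0 such that inf over {x ∈ ℝ^p : ‖x‖₂ = M} of (1/n) Σ_{i=1}^n U_1(x; a_i, b_i) is strictly positive, then inf over {x ∈ ℝ^p : ‖x‖₂ ≥ M} of (1/n) Σ_{i=1}^n U_1(x; a_i, b_i) is strictly positive. -/

import Mathlib

open MeasureTheory ProbabilityTheory
open scoped BigOperators RealInnerProductSpace Gradient

/-- The kernel assumption: `K` is a nonnegative, symmetric kernel integrating to one,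
bounded, Lipschitz, positive at zero, and `x ↦ x * K x` is bounded, Lipschitz and
absolutely integrable. -/
structure IsGoodKernel (K : ℝ → ℝ) : Prop where
  nonneg : ∀ x, 0 ≤ K x
  symm : ∀ x, K x = K (-x)
  integral_one : (∫ x, K x) = 1
  bounded : ∃ B, ∀ x, |K x| ≤ B
  lipschitz : ∃ L : NNReal, LipschitzWith L K
  pos_at_zero : 0 < K 0
  bar_bounded : ∃ B, ∀ x, |x * K x| ≤ B
  bar_lipschitz : ∃ L : NNReal, LipschitzWith L (fun x => x * K x)
  bar_integrable : Integrable (fun x => x * K x)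

/-- The scaled kernel `K_δ(x) = (1/δ) K(x/δ)`. -/
noncomputable def scaledKernel (K : ℝ → ℝ) (δ : ℝ) (x : ℝ) : ℝ := (1 / δ) * K (x / δ)

/-- The convolution-type smoothed loss `l_δ(x) = ∫ |y| K_δ(x - y) dy`. -/
noncomputable def smoothedLoss (K : ℝ → ℝ) (δ : ℝ) (x : ℝ) : ℝ :=
  ∫ y, |y| * scaledKernel K δ (x - y)

/-- The smoothed empirical objective
`F_δ(x) = (1/n) ∑ᵢ l_δ((aᵢᵀ x)² - bᵢ)`. -/
noncomputable def smoothedObj {p n : ℕ} (K : ℝ → ℝ) (δ : ℝ)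
    (a : Fin n → EuclideanSpace ℝ (Fin p)) (b : Fin n → ℝ)
    (x : EuclideanSpace ℝ (Fin p)) : ℝ :=
  (n : ℝ)⁻¹ * ∑ i, smoothedLoss K δ ((⟪a i, x⟫) ^ 2 - b i)

/-- `Δ(x) = min(‖x - x⋆‖, ‖x + x⋆‖)`, the distance to the pair of true signals. -/
noncomputable def distSig {p : ℕ} (xs x : EuclideanSpace ℝ (Fin p)) : ℝ :=
  min ‖x - xs‖ ‖x + xs‖

/-- The standard Gaussian measure `N(0, I_p)` on `EuclideanSpace ℝ (Fin p)`. -/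
noncomputable def stdGaussian (p : ℕ) : Measure (EuclideanSpace ℝ (Fin p)) :=
  Measure.map (MeasurableEquiv.toLp 2 (Fin p → ℝ))
    (Measure.pi fun _ => gaussianReal 0 1)

/-- `a` is a family of i.i.d. standard Gaussian random vectors in `ℝ^p`. -/
def IsIIDStdGaussian {Ω : Type*} [MeasurableSpace Ω] (P : Measure Ω) {p : ℕ} {ι : Type*}
    (a : ι → Ω → EuclideanSpace ℝ (Fin p)) : Prop :=
  (∀ i, Measurable (a i)) ∧
  iIndepFun a P ∧
  (∀ i, Measure.map (a i) P = stdGaussian p)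


/-- `U₁(x; a, b) = 2 (aᵀx)² l'_δ((aᵀx)² - b)`. -/
noncomputable def U1 {p : ℕ} (K : ℝ → ℝ) (δ : ℝ)
    (x a : EuclideanSpace ℝ (Fin p)) (b : ℝ) : ℝ :=
  2 * (⟪a, x⟫) ^ 2 * deriv (smoothedLoss K δ) ((⟪a, x⟫) ^ 2 - b)

/-- `U₂(x; a, b) = (aᵀx⋆)² (2 l'_δ((aᵀx)² - b) + 4 (aᵀx)² l''_δ((aᵀx)² - b))`. -/
noncomputable def U2 {p : ℕ} (K : ℝ → ℝ) (δ : ℝ) (xs : EuclideanSpace ℝ (Fin p))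
    (x a : EuclideanSpace ℝ (Fin p)) (b : ℝ) : ℝ :=
  (⟪a, xs⟫) ^ 2 * (2 * deriv (smoothedLoss K δ) ((⟪a, x⟫) ^ 2 - b) +
    4 * (⟪a, x⟫) ^ 2 * deriv (deriv (smoothedLoss K δ)) ((⟪a, x⟫) ^ 2 - b))

/-- `U₃(x; a, b) = 2 (aᵀx⋆)(aᵀx) l'_δ((aᵀx)² - b)`. -/
noncomputable def U3 {p : ℕ} (K : ℝ → ℝ) (δ : ℝ) (xs : EuclideanSpace ℝ (Fin p))
    (x a : EuclideanSpace ℝ (Fin p)) (b : ℝ) : ℝ :=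
  2 * ⟪a, xs⟫ * ⟪a, x⟫ * deriv (smoothedLoss K δ) ((⟪a, x⟫) ^ 2 - b)

/-!
Writing `l_δ(s) = ∫ |s - u| K_δ(u) du` and differentiating under the integral gives
`l'_δ(s) = ∫ sign(s - u) K_δ(u) du`, which is nondecreasing with `|l'_δ| ≤ 1`. Along a ray,
`U₁(t x; a, b) = t² · 2 (aᵀx)² l'_δ(t² (aᵀx)² - b) ≥ t² U₁(x; a, b)` for `|t| ≥ 1`, so an
average of `U₁` that is nonnegative at a point of the sphere only grows along the outward ray
through it. The bound on `l'_δ` keeps the average bounded below on the sphere, so that the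
`sInf` there is a genuine lower bound rather than the junk value of an unbounded set.
-/

lemma Real.monotone_sign : Monotone Real.sign := by
  intro a b hab
  rcases lt_trichotomy a 0 with ha | rfl | ha <;> rcases lt_trichotomy b 0 with hb | rfl | hb <;>
    simp [Real.sign_of_neg, Real.sign_of_pos, Real.sign_zero, *] <;> linarith

lemma Real.abs_sign_le_one (r : ℝ) : |Real.sign r| ≤ 1 := by
  rcases Real.sign_apply_eq r with h | h | h <;> simp [h]

lemma Real.hasDerivAt_abs_sub {u x : ℝ} (hu : u ≠ x) :
    HasDerivAt (fun y => |y - u|) (Real.sign (x - u)) x := by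
  rcases lt_or_gt_of_ne hu with h | h
  · rw [Real.sign_of_pos (sub_pos.2 h)]
    exact (hasDerivAt_abs_pos (sub_pos.2 h)).comp_sub_const x u
  · rw [Real.sign_of_neg (sub_neg.2 h)]
    exact (hasDerivAt_abs_neg (sub_neg.2 h)).comp_sub_const x u

section AbsSmoothing

variable {k : ℝ → ℝ}

lemma integrable_abs_sub_mul (hk0 : ∀ u, 0 ≤ k u) (hk : Integrable k)
    (hkm : Integrable fun u => u * k u) (x : ℝ) : Integrable fun u => |x - u| * k u := by
  refine ((hk.const_mul x).sub hkm).abs.congr (.of_forall fun u => ?_)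
  simp only [Pi.sub_apply, ← sub_mul, abs_mul, abs_of_nonneg (hk0 u)]

lemma integrable_sign_sub_mul (hk : Integrable k) (x : ℝ) :
    Integrable fun u => Real.sign (x - u) * k u :=
  hk.bdd_mul
    (Real.monotone_sign.measurable.comp (measurable_const.sub measurable_id)).aestronglyMeasurable
    (.of_forall fun u => Real.abs_sign_le_one (x - u))

lemma hasDerivAt_integral_abs_sub_mul (hk0 : ∀ u, 0 ≤ k u) (hk : Integrable k)
    (hkm : Integrable fun u => u * k u) (x₀ : ℝ) :
    HasDerivAt (fun x => ∫ u, |x - u| * k u) (∫ u, Real.sign (x₀ - u) * k u) x₀ := by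
  have hlip : ∀ u, LipschitzWith (Real.nnabs (k u)) fun x => |x - u| * k u := fun u =>
    .of_dist_le_mul fun x y => by
      rw [Real.dist_eq, Real.dist_eq, Real.coe_nnabs, abs_of_nonneg (hk0 u), ← sub_mul,
        abs_mul, abs_of_nonneg (hk0 u), mul_comm (k u)]
      refine mul_le_mul_of_nonneg_right ?_ (hk0 u)
      simpa using abs_abs_sub_abs_le_abs_sub (x - u) (y - u)
  have hdiff : ∀ᵐ u, HasDerivAt (fun x => |x - u| * k u) (Real.sign (x₀ - u) * k u) x₀ := by
    filter_upwards [measure_eq_zero_iff_ae_notMem.1 (Real.volume_singleton (a := x₀))]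
      with u hu
    exact (Real.hasDerivAt_abs_sub hu).mul_const (k u)
  exact (hasDerivAt_integral_of_dominated_loc_of_lip Filter.univ_mem
    (.of_forall fun x => (integrable_abs_sub_mul hk0 hk hkm x).aestronglyMeasurable)
    (integrable_abs_sub_mul hk0 hk hkm x₀) (integrable_sign_sub_mul hk x₀).aestronglyMeasurable
    (.of_forall fun u => (hlip u).lipschitzOnWith) hk hdiff).2

lemma monotone_integral_sign_sub_mul (hk0 : ∀ u, 0 ≤ k u) (hk : Integrable k) :
    Monotone fun x => ∫ u, Real.sign (x - u) * k u := fun _ _ hxy =>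
  integral_mono (integrable_sign_sub_mul hk _) (integrable_sign_sub_mul hk _) fun u =>
    mul_le_mul_of_nonneg_right (Real.monotone_sign (sub_le_sub_right hxy u)) (hk0 u)

lemma abs_integral_sign_sub_mul_le (hk0 : ∀ u, 0 ≤ k u) (hk : Integrable k) (x : ℝ) :
    |∫ u, Real.sign (x - u) * k u| ≤ ∫ u, k u :=
  norm_integral_le_of_norm_le (f := fun u => Real.sign (x - u) * k u) hk <| .of_forall fun u => by
    rw [Real.norm_eq_abs, abs_mul, abs_of_nonneg (hk0 u)]
    exact mul_le_of_le_one_left (hk0 u) (Real.abs_sign_le_one (x - u))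

end AbsSmoothing

section SmoothedLoss

variable {K : ℝ → ℝ} {δ : ℝ}

lemma IsGoodKernel.integrable (hK : IsGoodKernel K) : Integrable K :=
  by_contra fun h => by simpa [integral_undef h] using hK.integral_one

lemma scaledKernel_nonneg (hK : IsGoodKernel K) (hδ : 0 < δ) (u : ℝ) :
    0 ≤ scaledKernel K δ u :=
  mul_nonneg (by positivity) (hK.nonneg _)

lemma integrable_scaledKernel (hK : IsGoodKernel K) (hδ : δ ≠ 0) :
    Integrable (scaledKernel K δ) :=
  (hK.integrable.comp_div hδ).const_mul _

lemma integrable_mul_scaledKernel (hK : IsGoodKernel K) (hδ : δ ≠ 0) :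
    Integrable fun u => u * scaledKernel K δ u :=
  (hK.bar_integrable.comp_div hδ).congr (.of_forall fun u => by simp only [scaledKernel]; ring)

lemma integral_scaledKernel (hK : IsGoodKernel K) (hδ : 0 < δ) :
    ∫ u, scaledKernel K δ u = 1 := by
  simp only [scaledKernel]
  rw [integral_const_mul, Measure.integral_comp_div K δ, hK.integral_one, abs_of_pos hδ,
    smul_eq_mul, mul_one, one_div_mul_cancel hδ.ne']

lemma smoothedLoss_eq_integral_abs_sub_mul (K : ℝ → ℝ) (δ : ℝ) :
    smoothedLoss K δ = fun x => ∫ u, |x - u| * scaledKernel K δ u := by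
  ext x
  rw [smoothedLoss, ← integral_sub_left_eq_self _ volume x]
  simp only [sub_sub_cancel]

lemma hasDerivAt_smoothedLoss (hK : IsGoodKernel K) (hδ : 0 < δ) (x : ℝ) :
    HasDerivAt (smoothedLoss K δ) (∫ u, Real.sign (x - u) * scaledKernel K δ u) x := by
  rw [smoothedLoss_eq_integral_abs_sub_mul]
  exact hasDerivAt_integral_abs_sub_mul (scaledKernel_nonneg hK hδ)
    (integrable_scaledKernel hK hδ.ne') (integrable_mul_scaledKernel hK hδ.ne') x

lemma monotone_deriv_smoothedLoss (hK : IsGoodKernel K) (hδ : 0 < δ) :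
    Monotone (deriv (smoothedLoss K δ)) := by
  rw [funext fun x => (hasDerivAt_smoothedLoss hK hδ x).deriv]
  exact monotone_integral_sign_sub_mul (scaledKernel_nonneg hK hδ)
    (integrable_scaledKernel hK hδ.ne')

lemma abs_deriv_smoothedLoss_le_one (hK : IsGoodKernel K) (hδ : 0 < δ) (x : ℝ) :
    |deriv (smoothedLoss K δ) x| ≤ 1 := by
  rw [(hasDerivAt_smoothedLoss hK hδ x).deriv, ← integral_scaledKernel hK hδ]
  exact abs_integral_sign_sub_mul_le (scaledKernel_nonneg hK hδ)
    (integrable_scaledKernel hK hδ.ne') x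

end SmoothedLoss

lemma exists_norm_eq_smul_of_le_norm {E : Type*} [NormedAddCommGroup E] [NormedSpace ℝ E]
    {M : ℝ} (hM : 0 < M) {x : E} (hx : M ≤ ‖x‖) :
    ∃ y : E, ‖y‖ = M ∧ ∃ t : ℝ, 1 ≤ t ∧ t • y = x := by
  have hx0 : 0 < ‖x‖ := hM.trans_le hx
  refine ⟨(M / ‖x‖) • x, ?_, ‖x‖ / M, (one_le_div hM).2 hx, ?_⟩
  · rw [norm_smul, Real.norm_of_nonneg (by positivity), div_mul_cancel₀ _ hx0.ne']
  · rw [smul_smul, div_mul_div_comm, mul_comm ‖x‖, div_self (mul_pos hM hx0).ne', one_smul]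

section U1

variable {p n : ℕ} {K : ℝ → ℝ} {δ : ℝ}

lemma neg_le_U1 (hK : IsGoodKernel K) (hδ : 0 < δ) (x a : EuclideanSpace ℝ (Fin p))
    (b : ℝ) :
    -(2 * ‖a‖ ^ 2 * ‖x‖ ^ 2) ≤ U1 K δ x a b := by
  have hd := (abs_le.1 (abs_deriv_smoothedLoss_le_one hK hδ (⟪a, x⟫ ^ 2 - b))).1
  have hi : ⟪a, x⟫ ^ 2 ≤ ‖a‖ ^ 2 * ‖x‖ ^ 2 := by
    rw [← mul_pow, ← sq_abs]
    exact pow_le_pow_left₀ (abs_nonneg _) (abs_real_inner_le_norm a x) 2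
  unfold U1
  nlinarith [sq_nonneg ⟪a, x⟫]

lemma sq_mul_U1_le_U1_smul (hK : IsGoodKernel K) (hδ : 0 < δ) {t : ℝ} (ht : 1 ≤ |t|)
    (x a : EuclideanSpace ℝ (Fin p)) (b : ℝ) :
    t ^ 2 * U1 K δ x a b ≤ U1 K δ (t • x) a b := by
  have ht2 : 1 ≤ t ^ 2 := by nlinarith [sq_abs t, abs_nonneg t]
  have hmono : deriv (smoothedLoss K δ) (⟪a, x⟫ ^ 2 - b)
      ≤ deriv (smoothedLoss K δ) (t ^ 2 * ⟪a, x⟫ ^ 2 - b) :=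
    monotone_deriv_smoothedLoss hK hδ (by nlinarith [sq_nonneg ⟪a, x⟫])
  calc t ^ 2 * U1 K δ x a b
      = t ^ 2 * (2 * ⟪a, x⟫ ^ 2) * deriv (smoothedLoss K δ) (⟪a, x⟫ ^ 2 - b) := by
        rw [U1]; ring
    _ ≤ t ^ 2 * (2 * ⟪a, x⟫ ^ 2) * deriv (smoothedLoss K δ) (t ^ 2 * ⟪a, x⟫ ^ 2 - b) := by
        gcongr
    _ = U1 K δ (t • x) a b := by
        rw [U1, real_inner_smul_right, mul_pow]; ring

noncomputable def avgU1 (K : ℝ → ℝ) (δ : ℝ) (a : Fin n → EuclideanSpace ℝ (Fin p))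
    (b : Fin n → ℝ) (x : EuclideanSpace ℝ (Fin p)) : ℝ :=
  (n : ℝ)⁻¹ * ∑ i, U1 K δ x (a i) (b i)

lemma bddBelow_avgU1_image (hK : IsGoodKernel K) (hδ : 0 < δ)
    (a : Fin n → EuclideanSpace ℝ (Fin p)) (b : Fin n → ℝ)
    {s : Set (EuclideanSpace ℝ (Fin p))} (hs : Bornology.IsBounded s) :
    BddBelow (avgU1 K δ a b '' s) := by
  obtain ⟨R, hR⟩ := hs.exists_norm_le
  refine ⟨(n : ℝ)⁻¹ * ∑ i, -(2 * ‖a i‖ ^ 2 * R ^ 2), ?_⟩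
  rintro _ ⟨x, hx, rfl⟩
  refine mul_le_mul_of_nonneg_left (Finset.sum_le_sum fun i _ => ?_) (by positivity)
  have hxR : ‖x‖ ^ 2 ≤ R ^ 2 := pow_le_pow_left₀ (norm_nonneg x) (hR x hx) 2
  nlinarith [neg_le_U1 hK hδ x (a i) (b i), sq_nonneg ‖a i‖]

lemma avgU1_le_avgU1_smul (hK : IsGoodKernel K) (hδ : 0 < δ)
    (a : Fin n → EuclideanSpace ℝ (Fin p)) (b : Fin n → ℝ) {x : EuclideanSpace ℝ (Fin p)}
    (hx : 0 ≤ avgU1 K δ a b x) {t : ℝ} (ht : 1 ≤ |t|) :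
    avgU1 K δ a b x ≤ avgU1 K δ a b (t • x) := by
  have ht2 : 1 ≤ t ^ 2 := by nlinarith [sq_abs t, abs_nonneg t]
  calc avgU1 K δ a b x
      ≤ t ^ 2 * avgU1 K δ a b x := le_mul_of_one_le_left hx ht2
    _ = (n : ℝ)⁻¹ * ∑ i, t ^ 2 * U1 K δ x (a i) (b i) := by
        rw [avgU1, ← Finset.mul_sum, mul_left_comm]
    _ ≤ avgU1 K δ a b (t • x) := by
        unfold avgU1
        gcongr with i
        exact sq_mul_U1_le_U1_smul hK hδ ht x _ _

end U1

theorem U1_positivity_propagation_general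
    {p n : ℕ} (K : ℝ → ℝ) (hK : IsGoodKernel K) (δ : ℝ) (hδ : 0 < δ)
    (a : Fin n → EuclideanSpace ℝ (Fin p)) (b : Fin n → ℝ)
    (M : ℝ) (hM : 0 < M)
    (hpos : 0 < sInf ((fun x : EuclideanSpace ℝ (Fin p) =>
      (n : ℝ)⁻¹ * ∑ i, U1 K δ x (a i) (b i)) ''
        {x : EuclideanSpace ℝ (Fin p) | ‖x‖ = M})) :
    0 < sInf ((fun x : EuclideanSpace ℝ (Fin p) =>
      (n : ℝ)⁻¹ * ∑ i, U1 K δ x (a i) (b i)) ''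
        {x : EuclideanSpace ℝ (Fin p) | M ≤ ‖x‖}) := by
  change 0 < sInf (avgU1 K δ a b '' _) at hpos ⊢
  have hbdd : BddBelow (avgU1 K δ a b '' {x | ‖x‖ = M}) :=
    bddBelow_avgU1_image hK hδ a b ((Metric.isBounded_sphere (x := 0) (r := M)).subset
      fun x hx => mem_sphere_zero_iff_norm.2 hx)
  have hne : (avgU1 K δ a b '' {x | ‖x‖ = M}).Nonempty :=
    Set.nonempty_iff_ne_empty.2 fun h => by simp [h] at hpos
  refine hpos.trans_le (le_csInf (hne.mono (Set.image_mono fun x hx => hx.ge)) ?_)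
  rintro _ ⟨x, hx, rfl⟩
  obtain ⟨y, hy, t, ht, rfl⟩ := exists_norm_eq_smul_of_le_norm hM hx
  have hmy : sInf (avgU1 K δ a b '' {x | ‖x‖ = M}) ≤ avgU1 K δ a b y :=
    csInf_le hbdd ⟨y, hy, rfl⟩
  exact hmy.trans (avgU1_le_avgU1_smul hK hδ a b (hpos.le.trans hmy) (ht.trans (le_abs_self t)))

/-- Positivity propagation to the unbounded region. If the infimum of
`(1/n) ∑ᵢ U₁(x; aᵢ, bᵢ)` over the sphere `‖x‖ = M` is strictly positive, then so is its
infimum over the whole region `‖x‖ ≥ M`. -/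
theorem U1_positivity_propagation
    {p n : ℕ} (K : ℝ → ℝ) (hK : IsGoodKernel K) (δ : ℝ) (hδ : 0 < δ)
    (a : Fin n → EuclideanSpace ℝ (Fin p)) (b : Fin n → ℝ) (hb : ∀ i, 0 ≤ b i)
    (M : ℝ) (hM : 0 < M)
    (hpos : 0 < sInf ((fun x : EuclideanSpace ℝ (Fin p) =>
      (n : ℝ)⁻¹ * ∑ i, U1 K δ x (a i) (b i)) ''
        {x : EuclideanSpace ℝ (Fin p) | ‖x‖ = M})) :
    0 < sInf ((fun x : EuclideanSpace ℝ (Fin p) =>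
      (n : ℝ)⁻¹ * ∑ i, U1 K δ x (a i) (b i)) ''
        {x : EuclideanSpace ℝ (Fin p) | M ≤ ‖x‖}) :=
  U1_positivity_propagation_general K hK δ hδ a b M hM hpos
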